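/- arXiv:2107.08676 — 2 statements merged into one kernel-verified Lean document; each statement's English description precedes it below -/
import Mathlib

section
/- Let f be an n-variable Boolean function and t an integer with 1 ≤ t ≤ n. Then: (1) t-inf(f) attains its maximum value 1 if and only if f is (n−t)-resilient; (2) t-inf(f) attains its minimum value 0 if and only if f is a constant function. -/
/-!
The Walsh spectrum turns influences into spectral masses: `inf_f(T)` is the Walsh mass
`Σ W_f(u)²` of the `u` that do not vanish on `T`, and since exactly `C(n - wt u, t)` of the
`t`-sets avoid the support of `u`,
`1 - t-inf(f) = Σ_u W_f(u)² C(n - wt u, t) / C(n, t)`.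
By Parseval `Σ_u W_f(u)² = 1`, so `t-inf(f)` is an average of the weights
`1 - C(n - wt u, t) / C(n, t) ∈ [0, 1]`. The weight is `1` iff `wt u > n - t`, and `0` iff
`u = 0`, so `t-inf(f) = 1` iff `W_f` vanishes in weights `≤ n - t`, and `t-inf(f) = 0` iff
`W_f` is supported at `0`, which by Walsh inversion means that `f` is constant.
-/

open Finset

namespace BF

/-- Hamming weight of a vector in `F_2^n`. -/
def wt {n : ℕ} (a : Fin n → ZMod 2) : ℕ := (univ.filter fun i => a i ≠ 0).card

/-- Normalised Walsh transform `W_f(a) = 2^{-n} Σ_x (-1)^{f(x) ⊕ ⟨x,a⟩}`. -/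
noncomputable def walsh {n : ℕ} (f : (Fin n → ZMod 2) → ZMod 2) (a : Fin n → ZMod 2) : ℝ :=
  (1 / 2 ^ n) * ∑ x : Fin n → ZMod 2, (-1 : ℝ) ^ (f x + ∑ i, x i * a i).val

/-- Normalised auto-correlation `C_f(a) = 2^{-n} Σ_x (-1)^{f(x) ⊕ f(x ⊕ a)}`. -/
noncomputable def autocorr {n : ℕ} (f : (Fin n → ZMod 2) → ZMod 2) (a : Fin n → ZMod 2) : ℝ :=
  (1 / 2 ^ n) * ∑ x : Fin n → ZMod 2, (-1 : ℝ) ^ (f x + f (x + a)).val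

/-- Influence of the set of variables `T` on `f`:
`inf_f(T) = 1 - 2^{-#T} Σ_{a ≤ χ_T} C_f(a)`. -/
noncomputable def influence {n : ℕ} (f : (Fin n → ZMod 2) → ZMod 2) (T : Finset (Fin n)) : ℝ :=
  1 - (1 / 2 ^ T.card) *
    ∑ a ∈ univ.filter (fun a : Fin n → ZMod 2 => ∀ i, a i ≠ 0 → i ∈ T), autocorr f a

/-- Total influence `t-inf(f) = (Σ_{#T = t} inf_f(T)) / C(n,t)`. -/
noncomputable def totalInf {n : ℕ} (f : (Fin n → ZMod 2) → ZMod 2) (t : ℕ) : ℝ :=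
  (∑ T ∈ univ.filter (fun T : Finset (Fin n) => T.card = t), influence f T) / (n.choose t)

/-- `p̂_f(k) = Σ_{wt(u) = k} (W_f(u))²`. -/
noncomputable def pHat {n : ℕ} (f : (Fin n → ZMod 2) → ZMod 2) (k : ℕ) : ℝ :=
  ∑ u ∈ univ.filter (fun u : Fin n → ZMod 2 => wt u = k), (walsh f u) ^ 2

/-- `f` is `m`-resilient: the Walsh transform vanishes at all points of weight at most `m`. -/
def resilient {n : ℕ} (f : (Fin n → ZMod 2) → ZMod 2) (m : ℕ) : Prop :=
  ∀ a : Fin n → ZMod 2, wt a ≤ m → walsh f a = 0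

noncomputable def chi (a : ZMod 2) : ℝ := (-1) ^ a.val

@[simp] lemma chi_zero : chi 0 = 1 := rfl

@[simp] lemma chi_one : chi 1 = -1 := by norm_num [chi, ZMod.val_one]

lemma chi_add (a b : ZMod 2) : chi (a + b) = chi a * chi b := by
  rw [chi, chi, chi, ZMod.val_add, ← pow_add, ← neg_one_pow_eq_pow_mod_two]

lemma zmod_two_eq_zero_or_one (a : ZMod 2) : a = 0 ∨ a = 1 := by decide +revert

lemma chi_injective : Function.Injective chi := by
  intro a b h
  rcases zmod_two_eq_zero_or_one a with rfl | rfl <;>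
    rcases zmod_two_eq_zero_or_one b with rfl | rfl <;> first | rfl | norm_num at h

lemma chi_sum {ι : Type*} (s : Finset ι) (g : ι → ZMod 2) :
    chi (∑ i ∈ s, g i) = ∏ i ∈ s, chi (g i) := by
  induction s using Finset.cons_induction with
  | empty => simp
  | cons i s hi ih => rw [sum_cons, prod_cons, chi_add, ih]

lemma sum_chi_mul (c : ZMod 2) : ∑ b : ZMod 2, chi (b * c) = if c = 0 then 2 else 0 := by
  rcases zmod_two_eq_zero_or_one c with rfl | rfl
  · simp
  · simp [show (univ : Finset (ZMod 2)) = {0, 1} by decide]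

section Orthogonality

variable {ι : Type*} [Fintype ι] [DecidableEq ι]

-- The decidability instance is a binder so that the lemma matches the one `influence` carries.
lemma sum_chi_dotProduct_of_support_subset (T : Finset ι)
    [DecidablePred fun a : ι → ZMod 2 => ∀ i, a i ≠ 0 → i ∈ T] (u : ι → ZMod 2) :
    ∑ a ∈ univ.filter (fun a : ι → ZMod 2 => ∀ i, a i ≠ 0 → i ∈ T), chi (a ⬝ᵥ u)
      = if ∀ i ∈ T, u i = 0 then 2 ^ #T else 0 := by
  have hsupp : univ.filter (fun a : ι → ZMod 2 => ∀ i, a i ≠ 0 → i ∈ T)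
      = Fintype.piFinset fun i => if i ∈ T then univ else {0} := by
    ext a
    simp only [mem_filter, mem_univ, true_and, Fintype.mem_piFinset]
    refine forall_congr' fun i => ?_
    split_ifs with hi <;> simp [hi]
  rw [hsupp]
  simp_rw [dotProduct, chi_sum]
  rw [← prod_univ_sum (fun i => if i ∈ T then univ else {0}) (fun i b => chi (b * u i))]
  have hfactor : ∀ i, ∑ b ∈ (if i ∈ T then univ else {0}), chi (b * u i)
      = if i ∈ T then (if u i = 0 then 2 else 0) else 1 := by
    intro i
    split_ifs <;> simp_all [sum_chi_mul]
  simp only [hfactor]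
  rw [← prod_filter, filter_mem_eq_inter, univ_inter, prod_ite_zero, prod_const]
  congr

lemma sum_chi_dotProduct (u : ι → ZMod 2) :
    ∑ a : ι → ZMod 2, chi (a ⬝ᵥ u) = if u = 0 then 2 ^ Fintype.card ι else 0 := by
  have h := sum_chi_dotProduct_of_support_subset univ u
  rw [filter_true_of_mem fun a _ i _ => mem_univ i] at h
  simpa [funext_iff] using h

lemma sum_chi_dotProduct_mul_chi_dotProduct (x y : ι → ZMod 2) :
    ∑ u : ι → ZMod 2, chi (x ⬝ᵥ u) * chi (y ⬝ᵥ u)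
      = if x = y then 2 ^ Fintype.card ι else 0 := by
  simp_rw [← chi_add, ← add_dotProduct, dotProduct_comm (x + y), sum_chi_dotProduct,
    add_eq_zero_iff_eq_neg, ZModModule.neg_eq_self]

end Orthogonality

lemma wt_le {n : ℕ} (u : Fin n → ZMod 2) : wt u ≤ n :=
  (card_filter_le _ _).trans_eq (card_fin n)

lemma wt_eq_zero_iff {n : ℕ} {u : Fin n → ZMod 2} : wt u = 0 ↔ u = 0 := by
  simp [wt, funext_iff]

lemma card_zeros_eq_sub_wt {n : ℕ} (u : Fin n → ZMod 2) : #{i | u i = 0} = n - wt u := by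
  have h := card_filter_add_card_filter_not (s := univ) (fun i => u i = 0)
  rw [card_univ, Fintype.card_fin] at h
  simp only [wt, ne_eq]
  omega

lemma card_subsets_of_zeros_eq_choose {n : ℕ} (u : Fin n → ZMod 2) (t : ℕ) :
    #{T : Finset (Fin n) | #T = t ∧ ∀ i ∈ T, u i = 0} = (n - wt u).choose t := by
  rw [← card_zeros_eq_sub_wt, ← card_powersetCard]
  congr 1
  ext T
  simp only [mem_filter, mem_univ, true_and, mem_powersetCard, subset_iff]
  tauto

lemma choose_lt_choose_of_lt {m n t : ℕ} (hmn : m < n) (ht : 0 < t) (htn : t ≤ n) :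
    m.choose t < n.choose t := by
  rw [Nat.choose_eq_choose_pred_add (n := n) (by omega) ht]
  have hpos : 0 < (n - 1).choose (t - 1) := Nat.choose_pos (by omega)
  have hle : m.choose t ≤ (n - 1).choose t := Nat.choose_le_choose t (by omega)
  omega

lemma sum_sq_mul_eq_zero_iff {ι : Type*} [Fintype ι] {g c : ι → ℝ} (hc : ∀ i, 0 ≤ c i) :
    ∑ i, g i ^ 2 * c i = 0 ↔ ∀ i, 0 < c i → g i = 0 := by
  rw [sum_eq_zero_iff_of_nonneg fun i _ => mul_nonneg (sq_nonneg _) (hc i)]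
  refine forall_congr' fun i => ?_
  rw [(hc i).lt_iff_ne', mul_eq_zero, pow_eq_zero_iff two_ne_zero]
  simp only [mem_univ, true_implies]
  tauto

section Walsh

variable {n : ℕ} (f : (Fin n → ZMod 2) → ZMod 2)

lemma walsh_eq_sum_chi (a : Fin n → ZMod 2) :
    walsh f a = (2 ^ n)⁻¹ * ∑ x, chi (f x) * chi (x ⬝ᵥ a) := by
  simp only [walsh, one_div, ← chi_add]
  rfl

lemma autocorr_eq_sum_walsh_sq (a : Fin n → ZMod 2) :
    autocorr f a = ∑ u, walsh f u ^ 2 * chi (a ⬝ᵥ u) := by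
  have h2n : (2 : ℝ) ^ n ≠ 0 := by positivity
  symm
  calc ∑ u, walsh f u ^ 2 * chi (a ⬝ᵥ u)
      = ((2 ^ n)⁻¹) ^ 2 * ∑ x, ∑ y, chi (f x) * chi (f y) *
          ∑ u, chi ((x + a) ⬝ᵥ u) * chi (y ⬝ᵥ u) := by
        simp_rw [walsh_eq_sum_chi, mul_pow, sq, sum_mul_sum, add_dotProduct, chi_add, mul_sum,
          sum_mul]
        rw [sum_comm]
        refine sum_congr rfl fun x _ => ?_
        rw [sum_comm]
        refine sum_congr rfl fun y _ => ?_
        refine sum_congr rfl fun u _ => ?_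
        ring
    _ = ((2 ^ n)⁻¹) ^ 2 * ∑ x, chi (f x) * chi (f (x + a)) * 2 ^ n := by
        simp_rw [sum_chi_dotProduct_mul_chi_dotProduct, Fintype.card_fin, mul_ite, mul_zero,
          sum_ite_eq, mem_univ, if_true]
    _ = autocorr f a := by
        simp only [autocorr, one_div, ← chi_add, ← sum_mul]
        field_simp
        rfl

lemma chi_eq_sum_walsh_mul (x : Fin n → ZMod 2) :
    chi (f x) = ∑ u, walsh f u * chi (x ⬝ᵥ u) := by
  have h2n : (2 : ℝ) ^ n ≠ 0 := by positivity
  symm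
  calc ∑ u, walsh f u * chi (x ⬝ᵥ u)
      = (2 ^ n)⁻¹ * ∑ y, chi (f y) * ∑ u, chi (y ⬝ᵥ u) * chi (x ⬝ᵥ u) := by
        simp_rw [walsh_eq_sum_chi, mul_sum, sum_mul]
        rw [sum_comm]
        refine sum_congr rfl fun y _ => sum_congr rfl fun u _ => ?_
        ring
    _ = chi (f x) := by
        simp_rw [sum_chi_dotProduct_mul_chi_dotProduct, Fintype.card_fin, mul_ite, mul_zero,
          sum_ite_eq', mem_univ, if_true]
        field_simp

lemma sum_walsh_sq : ∑ u, walsh f u ^ 2 = 1 := by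
  have h := autocorr_eq_sum_walsh_sq f 0
  simp only [zero_dotProduct, chi_zero, mul_one] at h
  rw [← h, autocorr]
  simp [CharTwo.add_self_eq_zero]

lemma exists_const_iff_walsh_eq_zero :
    (∃ c, ∀ x, f x = c) ↔ ∀ u, u ≠ 0 → walsh f u = 0 := by
  constructor
  · rintro ⟨c, hc⟩ u hu
    simp_rw [walsh_eq_sum_chi, hc, ← mul_sum, sum_chi_dotProduct, if_neg hu, mul_zero]
  · intro h
    have hconst : ∀ x, chi (f x) = walsh f 0 := fun x => by
      rw [chi_eq_sum_walsh_mul, sum_eq_single 0 (fun u _ hu => by rw [h u hu, zero_mul])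
        (by simp), dotProduct_zero, chi_zero, mul_one]
    exact ⟨f 0, fun x => chi_injective ((hconst x).trans (hconst 0).symm)⟩

end Walsh

section Influence

variable {n : ℕ} (f : (Fin n → ZMod 2) → ZMod 2)

lemma influence_eq_one_sub_sum_walsh_sq (T : Finset (Fin n)) :
    influence f T = 1 - ∑ u with ∀ i ∈ T, u i = 0, walsh f u ^ 2 := by
  have h2T : (2 : ℝ) ^ #T ≠ 0 := by positivity
  simp_rw [influence, autocorr_eq_sum_walsh_sq]
  rw [sum_comm]
  simp_rw [← mul_sum, sum_chi_dotProduct_of_support_subset, mul_ite, mul_zero, ← sum_filter,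
    mul_sum]
  congr 1
  exact sum_congr rfl fun u _ => by field_simp

lemma one_sub_totalInf_mul_choose {t : ℕ} (htn : t ≤ n) :
    (1 - totalInf f t) * n.choose t = ∑ u, walsh f u ^ 2 * (n - wt u).choose t := by
  have hC : (n.choose t : ℝ) ≠ 0 := by exact_mod_cast (Nat.choose_pos htn).ne'
  calc (1 - totalInf f t) * n.choose t
      = n.choose t - ∑ T : Finset (Fin n) with #T = t, influence f T := by
        rw [totalInf]
        field_simp
    _ = ∑ T : Finset (Fin n) with #T = t, ∑ u with ∀ i ∈ T, u i = 0, walsh f u ^ 2 := by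
        simp_rw [influence_eq_one_sub_sum_walsh_sq, sum_sub_distrib, sum_const,
          Finset.univ_filter_card_eq, card_powersetCard, card_univ, Fintype.card_fin]
        simp
    _ = ∑ u, ∑ T : Finset (Fin n) with #T = t ∧ ∀ i ∈ T, u i = 0, walsh f u ^ 2 :=
        sum_comm' fun T u => by simp
    _ = ∑ u, walsh f u ^ 2 * (n - wt u).choose t := by
        simp_rw [sum_const, card_subsets_of_zeros_eq_choose, nsmul_eq_mul, mul_comm]

lemma totalInf_mul_choose {t : ℕ} (htn : t ≤ n) :
    totalInf f t * n.choose t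
      = ∑ u, walsh f u ^ 2 * ((n.choose t : ℝ) - (n - wt u).choose t) := by
  simp_rw [mul_sub, sum_sub_distrib, ← sum_mul, sum_walsh_sq, one_mul,
    ← one_sub_totalInf_mul_choose f htn]
  ring

lemma totalInf_eq_one_iff {t : ℕ} (htn : t ≤ n) : totalInf f t = 1 ↔ resilient f (n - t) := by
  have hC : (n.choose t : ℝ) ≠ 0 := by exact_mod_cast (Nat.choose_pos htn).ne'
  have hsum : totalInf f t = 1 ↔ ∑ u, walsh f u ^ 2 * (n - wt u).choose t = 0 := by
    rw [← one_sub_totalInf_mul_choose f htn, mul_eq_zero, sub_eq_zero, eq_comm]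
    simp [hC]
  rw [hsum, sum_sq_mul_eq_zero_iff fun u => Nat.cast_nonneg _]
  refine forall_congr' fun u => imp_congr_left ?_
  have := wt_le u
  rw [Nat.cast_pos, Nat.pos_iff_ne_zero, Ne, Nat.choose_eq_zero_iff, not_lt]
  omega

lemma totalInf_eq_zero_iff {t : ℕ} (ht : 1 ≤ t) (htn : t ≤ n) :
    totalInf f t = 0 ↔ ∃ c, ∀ x, f x = c := by
  have hC : (n.choose t : ℝ) ≠ 0 := by exact_mod_cast (Nat.choose_pos htn).ne'
  have hsum : totalInf f t = 0 ↔
      ∑ u, walsh f u ^ 2 * ((n.choose t : ℝ) - (n - wt u).choose t) = 0 := by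
    rw [← totalInf_mul_choose f htn, mul_eq_zero]
    simp [hC]
  have hle : ∀ u : Fin n → ZMod 2, ((n - wt u).choose t : ℝ) ≤ n.choose t := fun u => by
    exact_mod_cast Nat.choose_le_choose t (Nat.sub_le n (wt u))
  rw [hsum, sum_sq_mul_eq_zero_iff fun u => sub_nonneg.mpr (hle u),
    exists_const_iff_walsh_eq_zero]
  refine forall_congr' fun u => imp_congr_left ?_
  rw [sub_pos, Nat.cast_lt, ne_eq, ← wt_eq_zero_iff]
  constructor
  · intro hlt hw
    simp [hw] at hlt
  · intro hw
    exact choose_lt_choose_of_lt (by have := wt_le u; omega) ht htn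

end Influence

/-- `t-inf(f)` attains its maximum value 1 iff `f` is `(n-t)`-resilient, and
its minimum value 0 iff `f` is constant. -/
theorem totalInf_max_min {n : ℕ} (f : (Fin n → ZMod 2) → ZMod 2) (t : ℕ)
    (h1 : 1 ≤ t) (h2 : t ≤ n) :
    (totalInf f t = 1 ↔ resilient f (n - t)) ∧
      (totalInf f t = 0 ↔ ∃ c : ZMod 2, ∀ x, f x = c) :=
  ⟨totalInf_eq_one_iff f h2, totalInf_eq_zero_iff f h1 h2⟩

end BF
end

section
/- Let f be an n-variable Boolean function and T ⊆ [n] a nonempty subset with #T = t. Then inf_f(T) ≤ 𝓘_f(T), where 𝓘_f(T) is the Ben-Or–Linial influence. Moreover, equality holds if and only if for every α ∈ F_2^{n−t}, the restriction f_α is either a constant function or a balanced function (equivalently, (W_{f_α}(0_t))² ∈ {0, 1}). -/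
/-! Writing `s(u) = (-1)^u` for the sign of `u ∈ F_2`: summing the auto-correlation over all
`α ≤ χ_T` gives `2^{-n} Σ_a (Σ_y s(f(y,a)))²`, so `inf_f(T)` is the average over the
restrictions `f_a` of `1 - W_{f_a}(0)²`, while `𝓘_f(T)` is the average of the indicator that
`f_a` is not constant. The two agree on constant restrictions, where `W_{f_a}(0)² = 1`, and
otherwise `1 - W_{f_a}(0)² ≤ 1` with equality exactly when `f_a` is balanced. -/

open Finset

namespace BF

/-- Combine an assignment `y` on the coordinates in `T` with an assignment `a` on the
coordinates outside `T` into a full input vector. -/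
def combine {n : ℕ} (T : Finset (Fin n)) (y : {i : Fin n // i ∈ T} → ZMod 2)
    (a : {i : Fin n // i ∉ T} → ZMod 2) : Fin n → ZMod 2 :=
  fun i => if h : i ∈ T then y ⟨i, h⟩ else a ⟨i, h⟩

/-- The Walsh transform, at the all-zero point, of the restriction `f_a` of `f` obtained by
fixing the variables outside `T` to the values of `a`. -/
noncomputable def restWalsh0 {n : ℕ} (f : (Fin n → ZMod 2) → ZMod 2) (T : Finset (Fin n))
    (a : {i : Fin n // i ∉ T} → ZMod 2) : ℝ :=
  (1 / 2 ^ T.card) * ∑ y : {i : Fin n // i ∈ T} → ZMod 2, (-1 : ℝ) ^ (f (combine T y a)).val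

/-- The Ben-Or–Linial influence: the probability over `a` (the values fixed outside `T`)
that the restriction `f_a` is not constant. -/
noncomputable def blInf {n : ℕ} (f : (Fin n → ZMod 2) → ZMod 2) (T : Finset (Fin n)) : ℝ :=
  ((univ.filter fun a : {i : Fin n // i ∉ T} → ZMod 2 =>
      ¬ ∀ y y' : {i : Fin n // i ∈ T} → ZMod 2,
        f (combine T y a) = f (combine T y' a)).card : ℝ) / 2 ^ (n - T.card)

lemma neg_one_pow_val_add (u v : ZMod 2) :
    (-1 : ℝ) ^ (u + v).val = (-1 : ℝ) ^ u.val * (-1 : ℝ) ^ v.val := by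
  rw [← pow_add, ZMod.val_add, ← neg_one_pow_eq_pow_mod_two]

lemma neg_one_pow_val_eq_one_iff (u : ZMod 2) : (-1 : ℝ) ^ u.val = 1 ↔ u = 0 := by
  rw [neg_one_pow_eq_one_iff_even (by norm_num), ← ZMod.natCast_eq_zero_iff_even,
    ZMod.natCast_zmod_val]

lemma neg_one_pow_val_le_one (u : ZMod 2) : (-1 : ℝ) ^ u.val ≤ 1 := by
  rcases neg_one_pow_eq_or ℝ u.val with h | h <;> norm_num [h]

/-- Expanding the square pairs up the signs, and `s(u) s(v) = 1` exactly when `u = v`. -/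
lemma sq_sum_neg_one_pow_val_eq_card_sq_iff {ι : Type*} [Fintype ι] (g : ι → ZMod 2) :
    (∑ i, (-1 : ℝ) ^ (g i).val) ^ 2 = (Fintype.card ι : ℝ) ^ 2 ↔ ∀ i j, g i = g j := by
  have hsq : (∑ i, (-1 : ℝ) ^ (g i).val) ^ 2 = ∑ p : ι × ι, (-1 : ℝ) ^ (g p.1 + g p.2).val := by
    simp_rw [sq, Fintype.sum_mul_sum, ← Fintype.sum_prod_type', neg_one_pow_val_add]
  have hcard : (Fintype.card ι : ℝ) ^ 2 = ∑ _p : ι × ι, (1 : ℝ) := by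
    simp [Fintype.card_prod, sq]
  rw [hsq, hcard, Finset.sum_eq_sum_iff_of_le fun p _ => neg_one_pow_val_le_one _]
  simp only [mem_univ, true_imp_iff, neg_one_pow_val_eq_one_iff, CharTwo.add_eq_zero,
    Prod.forall]

lemma sum_sum_mul_add_eq_sq {G R : Type*} [AddGroup G] [Fintype G] [CommSemiring R]
    (g : G → R) : ∑ y, ∑ y', g y' * g (y' + y) = (∑ y, g y) ^ 2 := by
  rw [sq, Fintype.sum_mul_sum, Finset.sum_comm]
  exact Fintype.sum_congr _ _ fun y' => Fintype.sum_equiv (Equiv.addLeft y') _ _ fun _ => rfl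

section Restriction

variable {n : ℕ} (T : Finset (Fin n))

lemma combine_add (y y' : {i : Fin n // i ∈ T} → ZMod 2) (a a' : {i : Fin n // i ∉ T} → ZMod 2) :
    combine T (y + y') (a + a') = combine T y a + combine T y' a' := by
  funext i
  simp only [combine, Pi.add_apply]
  split_ifs <;> rfl

lemma sum_eq_sum_sum_combine {M : Type*} [AddCommMonoid M] (F : (Fin n → ZMod 2) → M) :
    ∑ x, F x = ∑ a : {i : Fin n // i ∉ T} → ZMod 2, ∑ y, F (combine T y a) := by
  rw [← (Equiv.piEquivPiSubtypeProd (· ∈ T) fun _ => ZMod 2).symm.sum_comp F,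
    Fintype.sum_prod_type, Finset.sum_comm]
  rfl

lemma combine_zero_injective : Function.Injective fun y => combine T y 0 := by
  intro y y' h
  funext i
  simpa [combine, i.2] using congrFun h i.1

lemma filter_support_subset_eq_image :
    univ.filter (fun α : Fin n → ZMod 2 => ∀ i, α i ≠ 0 → i ∈ T)
      = univ.image fun y => combine T y 0 := by
  ext α
  simp only [mem_filter, mem_univ, true_and, mem_image]
  constructor
  · intro h
    refine ⟨fun i => α i.1, funext fun i => ?_⟩
    by_cases hi : i ∈ T
    · simp [combine, hi]
    · simp [combine, hi, not_imp_comm.mp (h i) hi]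
  · rintro ⟨y, rfl⟩ i hi
    by_contra hiT
    simp [combine, hiT] at hi

lemma autocorr_combine_zero (f : (Fin n → ZMod 2) → ZMod 2) (y : {i : Fin n // i ∈ T} → ZMod 2) :
    autocorr f (combine T y 0) = 1 / 2 ^ n * ∑ a, ∑ y',
      (-1 : ℝ) ^ (f (combine T y' a)).val * (-1 : ℝ) ^ (f (combine T (y' + y) a)).val := by
  rw [autocorr, sum_eq_sum_sum_combine T]
  refine congrArg _ (sum_congr rfl fun a _ => sum_congr rfl fun y' _ => ?_)
  rw [← neg_one_pow_val_add, ← combine_add, add_zero]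

lemma sum_autocorr_support_subset (f : (Fin n → ZMod 2) → ZMod 2) :
    ∑ α ∈ univ.filter (fun α : Fin n → ZMod 2 => ∀ i, α i ≠ 0 → i ∈ T), autocorr f α
      = 1 / 2 ^ n * ∑ a, (∑ y, (-1 : ℝ) ^ (f (combine T y a)).val) ^ 2 := by
  rw [filter_support_subset_eq_image, sum_image (combine_zero_injective T).injOn]
  simp_rw [autocorr_combine_zero, ← mul_sum]
  rw [Finset.sum_comm]
  simp_rw [sum_sum_mul_add_eq_sq]

lemma card_compl_fun :
    Fintype.card ({i : Fin n // i ∉ T} → ZMod 2) = 2 ^ (n - #T) := by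
  simp [Fintype.card_subtype_compl]

lemma influence_eq_sum (f : (Fin n → ZMod 2) → ZMod 2) :
    influence f T = 1 / 2 ^ (n - #T) * ∑ a, (1 - restWalsh0 f T a ^ 2) := by
  have hT : #T ≤ n := by simpa using T.card_le_univ
  have hn : (2 : ℝ) ^ n = 2 ^ (n - #T) * 2 ^ #T := by
    rw [← pow_add, Nat.sub_add_cancel hT]
  rw [influence, sum_autocorr_support_subset, sum_sub_distrib, sum_const, card_univ,
    card_compl_fun]
  simp_rw [restWalsh0, mul_pow, ← mul_sum, hn]
  field_simp
  ring

lemma blInf_eq_sum (f : (Fin n → ZMod 2) → ZMod 2) :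
    blInf f T = 1 / 2 ^ (n - #T) * ∑ a,
      if ¬ ∀ y y', f (combine T y a) = f (combine T y' a) then 1 else 0 := by
  rw [blInf, natCast_card_filter, one_div_mul_eq_div]

variable (f : (Fin n → ZMod 2) → ZMod 2) (a : {i : Fin n // i ∉ T} → ZMod 2)

lemma restWalsh0_sq_eq_one_iff :
    restWalsh0 f T a ^ 2 = 1 ↔ ∀ y y', f (combine T y a) = f (combine T y' a) := by
  have hcard : (Fintype.card ({i : Fin n // i ∈ T} → ZMod 2) : ℝ) = 2 ^ #T := by simp
  rw [restWalsh0, mul_pow, one_div_pow, one_div_mul_eq_div, div_eq_one_iff_eq (by positivity),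
    ← hcard, sq_sum_neg_one_pow_val_eq_card_sq_iff]

lemma one_sub_restWalsh0_sq_le :
    1 - restWalsh0 f T a ^ 2
      ≤ if ¬ ∀ y y', f (combine T y a) = f (combine T y' a) then 1 else 0 := by
  by_cases h : ∀ y y', f (combine T y a) = f (combine T y' a)
  · rw [if_neg (not_not_intro h), (restWalsh0_sq_eq_one_iff T f a).mpr h, sub_self]
  · rw [if_pos h]
    linarith [sq_nonneg (restWalsh0 f T a)]

lemma one_sub_restWalsh0_sq_eq_iff :
    (1 - restWalsh0 f T a ^ 2
      = if ¬ ∀ y y', f (combine T y a) = f (combine T y' a) then 1 else 0)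
      ↔ restWalsh0 f T a ^ 2 = 0 ∨ restWalsh0 f T a ^ 2 = 1 := by
  by_cases h : ∀ y y', f (combine T y a) = f (combine T y' a)
  · rw [if_neg (not_not_intro h), (restWalsh0_sq_eq_one_iff T f a).mpr h, sub_self]
    exact iff_of_true rfl (.inr rfl)
  · rw [if_pos h, sub_eq_self, or_iff_left (mt (restWalsh0_sq_eq_one_iff T f a).mp h)]

end Restriction

theorem influence_le_blInf_general {n : ℕ} (f : (Fin n → ZMod 2) → ZMod 2)
    (T : Finset (Fin n)) :
    influence f T ≤ blInf f T ∧
      (influence f T = blInf f T ↔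
        ∀ a : {i : Fin n // i ∉ T} → ZMod 2,
          (restWalsh0 f T a) ^ 2 = 0 ∨ (restWalsh0 f T a) ^ 2 = 1) := by
  have hle := fun a (_ : a ∈ univ) => one_sub_restWalsh0_sq_le T f a
  have hpos : (0 : ℝ) < 1 / 2 ^ (n - #T) := by positivity
  rw [influence_eq_sum, blInf_eq_sum]
  refine ⟨mul_le_mul_of_nonneg_left (sum_le_sum hle) hpos.le, ?_⟩
  rw [mul_right_inj' hpos.ne', sum_eq_sum_iff_of_le hle]
  simp only [mem_univ, true_imp_iff, one_sub_restWalsh0_sq_eq_iff]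

/-- `inf_f(T) ≤ 𝓘_f(T)`, with equality iff every restriction `f_a` satisfies
`(W_{f_a}(0_t))² ∈ {0, 1}` (i.e. is constant or balanced). -/
theorem influence_le_blInf {n : ℕ} (f : (Fin n → ZMod 2) → ZMod 2)
    (T : Finset (Fin n)) (hT : T.Nonempty) :
    influence f T ≤ blInf f T ∧
      (influence f T = blInf f T ↔
        ∀ a : {i : Fin n // i ∉ T} → ZMod 2,
          (restWalsh0 f T a) ^ 2 = 0 ∨ (restWalsh0 f T a) ^ 2 = 1) :=
  influence_le_blInf_general f T

end BF
end
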